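/- Let n ≥ 2 be an integer and δ ∈ (0, π/4). For every z = (z_1,…,z_{n−1}) with each z_k ∈ Σ_δ and ∑_{k=1}^{n−1} |z_k|² = 1, one has ||z|_−|² ≥ cos(2δ) and Re(|z|_−) ≥ √(cos(2δ))·cos(δ). -/

import Mathlib

open Complex Real Set

/-- The sector `Σ_δ = {r e^{iφ} : r ∈ ℝ \ {0}, |φ - π/2| < δ}` in the complex plane. -/
def sectorSigma (δ : ℝ) : Set ℂ :=
  {w | ∃ r φ : ℝ, r ≠ 0 ∧ |φ - π / 2| < δ ∧ w = (r : ℂ) * Complex.exp ((φ : ℂ) * Complex.I)}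

/-- `|z|_- = √(-∑ z_k²)`, using the principal branch of the square root
(`w ^ (1/2) = exp((1/2) log w)` with `arg ∈ (-π, π]`). -/
noncomputable def zMinus {m : ℕ} (z : Fin m → ℂ) : ℂ :=
  (-(∑ k, (z k) ^ 2)) ^ ((1 : ℂ) / 2)

/-! Squaring doubles the angle of `w ∈ Σ_δ` and the sign turns it by `π`, so `-w²` lies in the
sector of half-angle `2δ` around the positive real axis and `Re(-w²) ≥ cos 2δ · |w|²`. Summing,
`|z|_-` is the principal square root of some `u` with `Re u ≥ cos 2δ`, and both bounds follow from
`|√u|² = |u| ≥ Re u` and `Re √u = √((|u| + Re u) / 2) ≥ √(Re u)`. -/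

lemma neg_sq_ofReal_mul_exp (r φ : ℝ) :
    -((r : ℂ) * exp (φ * I)) ^ 2 = (r : ℂ) ^ 2 * exp (↑(2 * (φ - π / 2)) * I) := by
  have hexp : exp (↑(2 * (φ - π / 2)) * I) = -exp (φ * I) ^ 2 := by
    rw [← Complex.exp_nat_mul,
      show (↑(2 * (φ - π / 2)) : ℂ) * I = ((2 : ℕ) : ℂ) * (φ * I) - π * I by push_cast; ring,
      Complex.exp_sub, Complex.exp_pi_mul_I, div_neg, div_one]
  rw [hexp]
  ring

lemma cos_two_mul_mul_norm_sq_le_re_neg_sq {δ : ℝ} (hδ : δ ≤ π / 2) {w : ℂ}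
    (hw : w ∈ sectorSigma δ) : Real.cos (2 * δ) * ‖w‖ ^ 2 ≤ (-w ^ 2).re := by
  obtain ⟨r, φ, -, hφ, rfl⟩ := hw
  have hcos : Real.cos (2 * δ) ≤ Real.cos (2 * (φ - π / 2)) := by
    rw [← Real.cos_abs (2 * (φ - π / 2))]
    refine Real.cos_le_cos_of_nonneg_of_le_pi (abs_nonneg _) (by linarith) ?_
    rw [abs_mul, abs_two]
    linarith
  rw [neg_sq_ofReal_mul_exp, ← ofReal_pow, re_ofReal_mul, exp_ofReal_mul_I_re]
  simpa [Complex.norm_exp_ofReal_mul_I, mul_comm] using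
    mul_le_mul_of_nonneg_left hcos (sq_nonneg r)

lemma cos_two_mul_mul_sum_norm_sq_le_re_neg_sum_sq {ι : Type*} (s : Finset ι) {δ : ℝ}
    (hδ : δ ≤ π / 2) {z : ι → ℂ} (hz : ∀ k ∈ s, z k ∈ sectorSigma δ) :
    Real.cos (2 * δ) * ∑ k ∈ s, ‖z k‖ ^ 2 ≤ (-∑ k ∈ s, z k ^ 2).re := by
  rw [Finset.mul_sum, ← Finset.sum_neg_distrib, re_sum]
  exact Finset.sum_le_sum fun k hk => cos_two_mul_mul_norm_sq_le_re_neg_sq hδ (hz k hk)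

lemma sq_norm_cpow_half (w : ℂ) : ‖w ^ ((1 : ℂ) / 2)‖ ^ 2 = ‖w‖ := by
  rw [show (1 : ℂ) / 2 = ((1 / 2 : ℝ) : ℂ) by norm_num, norm_cpow_real, ← Real.sqrt_eq_rpow,
    Real.sq_sqrt (norm_nonneg w)]

lemma sqrt_re_le_re_cpow_half (w : ℂ) : √w.re ≤ (w ^ ((1 : ℂ) / 2)).re := by
  rw [one_div, cpow_inv_two_re]
  exact Real.sqrt_le_sqrt (by linarith [re_le_norm w])

theorem statement1_general (n : ℕ) (δ : ℝ) (hδ : δ ∈ Ioo (0 : ℝ) (π / 4))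
    (z : Fin (n - 1) → ℂ) (hz : ∀ k, z k ∈ sectorSigma δ)
    (hnorm : ∑ k, ‖z k‖ ^ 2 = 1) :
    Real.cos (2 * δ) ≤ ‖zMinus z‖ ^ 2 ∧
    Real.sqrt (Real.cos (2 * δ)) * Real.cos δ ≤ (zMinus z).re := by
  have hre : Real.cos (2 * δ) ≤ (-∑ k, z k ^ 2).re := by
    simpa [hnorm] using cos_two_mul_mul_sum_norm_sq_le_re_neg_sum_sq Finset.univ
      (by linarith [hδ.2, Real.pi_pos]) fun k _ => hz k
  constructor
  · rw [zMinus, sq_norm_cpow_half]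
    exact hre.trans (re_le_norm _)
  · calc √(Real.cos (2 * δ)) * Real.cos δ ≤ √(Real.cos (2 * δ)) :=
          mul_le_of_le_one_right (Real.sqrt_nonneg _) (Real.cos_le_one δ)
      _ ≤ √(-∑ k, z k ^ 2).re := Real.sqrt_le_sqrt hre
      _ ≤ (zMinus z).re := sqrt_re_le_re_cpow_half _

theorem statement1 (n : ℕ) (hn : 2 ≤ n) (δ : ℝ) (hδ : δ ∈ Ioo (0 : ℝ) (π / 4))
    (z : Fin (n - 1) → ℂ) (hz : ∀ k, z k ∈ sectorSigma δ)
    (hnorm : ∑ k, ‖z k‖ ^ 2 = 1) :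
    Real.cos (2 * δ) ≤ ‖zMinus z‖ ^ 2 ∧
    Real.sqrt (Real.cos (2 * δ)) * Real.cos δ ≤ (zMinus z).re :=
  statement1_general n δ hδ z hz hnorm
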